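/- Let n ≥ 1, α > 0, μ > 0, L ≥ 0, and let f : ℝⁿ → ℝ be L-smooth. Then for every p ∈ ℝⁿ, ∫ ‖(n/(2α²μ))·(f(p + μ•v) − f(p − μ•v)) • v‖² dσ_α(v) ≤ n²·(L·α·μ/2 + ‖∇f(p)‖)², where the integral is over v drawn from the uniform probability measure σ_α on the origin-centered sphere of radius α. -/

import Mathlib

/-!
The bound holds pointwise on the sphere. By the descent lemma (an `L`-Lipschitz gradient bounds
the first-order Taylor remainder by `L‖h‖²/2`), applied at `p` to `±μv`,
`|f(p + μv) − f(p − μv)| ≤ Lμ²α² + 2μα‖∇f(p)‖`; multiplying by `n/(2α²μ)` and `‖v‖ = α`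
bounds the norm of the estimator by `n(Lαμ/2 + ‖∇f(p)‖)`, and a pointwise bound on a
probability measure bounds the integral.
-/

open MeasureTheory

open scoped RealInnerProductSpace

section LipschitzGradient

variable {E : Type*} [NormedAddCommGroup E] [InnerProductSpace ℝ E] [CompleteSpace E]
  {f : E → ℝ} {L : ℝ}

theorem abs_sub_sub_inner_gradient_le (hf : Differentiable ℝ f)
    (hL : ∀ x y, ‖gradient f x - gradient f y‖ ≤ L * ‖x - y‖) (x h : E) :
    |f (x + h) - f x - ⟪gradient f x, h⟫| ≤ L / 2 * ‖h‖ ^ 2 := by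
  set g : ℝ → ℝ := fun t => f (x + t • h) - f x - t * ⟪gradient f x, h⟫
  set g' : ℝ → ℝ := fun t => ⟪gradient f (x + t • h) - gradient f x, h⟫
  have hg : ∀ t, HasDerivAt g (g' t) t := by
    intro t
    have hline : HasDerivAt (fun t : ℝ => x + t • h) h t := by
      simpa using ((hasDerivAt_id t).smul_const h).const_add x
    have hfline : HasDerivAt (fun t : ℝ => f (x + t • h)) ⟪gradient f (x + t • h), h⟫ t :=
      (hf _).hasGradientAt.hasFDerivAt.comp_hasDerivAt t hline
    exact ((hfline.sub_const (f x)).sub ((hasDerivAt_id t).mul_const _)).congr_deriv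
      (by simp [g', inner_sub_left])
  have hg'_le : ∀ t ∈ Set.Ico (0 : ℝ) 1, ‖g' t‖ ≤ L * ‖h‖ ^ 2 * t := by
    intro t ht
    calc ‖g' t‖ ≤ ‖gradient f (x + t • h) - gradient f x‖ * ‖h‖ := by
          rw [Real.norm_eq_abs]; exact abs_real_inner_le_norm _ _
      _ ≤ L * ‖t • h‖ * ‖h‖ := by
          gcongr; simpa using hL (x + t • h) x
      _ = L * ‖h‖ ^ 2 * t := by
          rw [norm_smul, Real.norm_of_nonneg ht.1]; ring
  have hB : ∀ t, HasDerivAt (fun t => L / 2 * ‖h‖ ^ 2 * t ^ 2) (L * ‖h‖ ^ 2 * t) t := fun t =>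
    ((hasDerivAt_pow 2 t).const_mul (L / 2 * ‖h‖ ^ 2)).congr_deriv (by push_cast; ring)
  have hg_le := image_norm_le_of_norm_deriv_right_le_deriv_boundary
    (fun t _ => (hg t).continuousAt.continuousWithinAt) (fun t _ => (hg t).hasDerivWithinAt)
    (by simp [g]) hB hg'_le (Set.right_mem_Icc.mpr zero_le_one)
  simpa [g, Real.norm_eq_abs] using hg_le

theorem abs_sub_sub_le_of_lipschitz_gradient (hf : Differentiable ℝ f)
    (hL : ∀ x y, ‖gradient f x - gradient f y‖ ≤ L * ‖x - y‖) (x h : E) :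
    |f (x + h) - f (x - h)| ≤ L * ‖h‖ ^ 2 + 2 * ‖gradient f x‖ * ‖h‖ := by
  have hplus := abs_le.mp (abs_sub_sub_inner_gradient_le hf hL x h)
  have hminus := abs_le.mp (abs_sub_sub_inner_gradient_le hf hL x (-h))
  have hinner := abs_le.mp (abs_real_inner_le_norm (gradient f x) h)
  rw [← sub_eq_add_neg, inner_neg_right, norm_neg] at hminus
  rw [abs_le]
  constructor <;> linarith [hplus.1, hplus.2, hminus.1, hminus.2, hinner.1, hinner.2]

end LipschitzGradient

noncomputable def twoPointEstimator {E : Type*} [NormedAddCommGroup E] [NormedSpace ℝ E]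
    (f : E → ℝ) (d α μ : ℝ) (p v : E) : E :=
  (d / (2 * α ^ 2 * μ) * (f (p + μ • v) - f (p - μ • v))) • v

theorem norm_twoPointEstimator_le {E : Type*} [NormedAddCommGroup E] [InnerProductSpace ℝ E]
    [CompleteSpace E] {f : E → ℝ} {L d α μ : ℝ} (hf : Differentiable ℝ f)
    (hL : ∀ x y, ‖gradient f x - gradient f y‖ ≤ L * ‖x - y‖) (hd : 0 ≤ d) (hα : 0 < α)
    (hμ : 0 < μ) (p : E) {v : E} (hv : ‖v‖ = α) :
    ‖twoPointEstimator f d α μ p v‖ ≤ d * (L * α * μ / 2 + ‖gradient f p‖) := by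
  have hΔ := abs_sub_sub_le_of_lipschitz_gradient hf hL p (μ • v)
  rw [norm_smul, Real.norm_of_nonneg hμ.le, hv] at hΔ
  calc ‖twoPointEstimator f d α μ p v‖
      = d / (2 * α ^ 2 * μ) * |f (p + μ • v) - f (p - μ • v)| * α := by
        rw [twoPointEstimator, norm_smul, Real.norm_eq_abs, abs_mul,
          abs_of_nonneg (by positivity : 0 ≤ d / (2 * α ^ 2 * μ)), hv]
    _ ≤ d / (2 * α ^ 2 * μ) * (L * (μ * α) ^ 2 + 2 * ‖gradient f p‖ * (μ * α)) * α := by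
        gcongr
    _ = d * (L * α * μ / 2 + ‖gradient f p‖) := by
        field_simp

theorem gw_estimator_second_moment_single_general
    (n : ℕ) (α μ L : ℝ) (hα : 0 < α) (hμ : 0 < μ)
    (σ : Measure (EuclideanSpace ℝ (Fin n))) [IsProbabilityMeasure σ]
    (hσ_sphere : ∀ᵐ v ∂σ, ‖v‖ = α)
    (f : EuclideanSpace ℝ (Fin n) → ℝ)
    (hf_diff : Differentiable ℝ f)
    (hf_smooth : ∀ x y, ‖gradient f x - gradient f y‖ ≤ L * ‖x - y‖)
    (p : EuclideanSpace ℝ (Fin n)) :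
    ∫ v, ‖((n : ℝ) / (2 * α ^ 2 * μ) * (f (p + μ • v) - f (p - μ • v))) • v‖ ^ 2 ∂σ
      ≤ (n : ℝ) ^ 2 * (L * α * μ / 2 + ‖gradient f p‖) ^ 2 := by
  have hbound : ∀ᵐ v ∂σ, ‖‖twoPointEstimator f n α μ p v‖ ^ 2‖
      ≤ (n : ℝ) ^ 2 * (L * α * μ / 2 + ‖gradient f p‖) ^ 2 := by
    filter_upwards [hσ_sphere] with v hv
    rw [norm_pow, norm_norm, ← mul_pow]
    gcongr
    exact norm_twoPointEstimator_le hf_diff hf_smooth n.cast_nonneg hα hμ p hv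
  calc ∫ v, ‖twoPointEstimator f n α μ p v‖ ^ 2 ∂σ
      ≤ ‖∫ v, ‖twoPointEstimator f n α μ p v‖ ^ 2 ∂σ‖ := Real.le_norm_self _
    _ ≤ (n : ℝ) ^ 2 * (L * α * μ / 2 + ‖gradient f p‖) ^ 2 * σ.real Set.univ :=
        norm_integral_le_of_norm_le_const hbound
    _ = (n : ℝ) ^ 2 * (L * α * μ / 2 + ‖gradient f p‖) ^ 2 := by simp

/-- For an `L`-smooth `f : ℝⁿ → ℝ`, the second moment of the single-sample
two-point zeroth-order gradient estimator is at most `n²·(Lαμ/2 + ‖∇f(p)‖)²`. -/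
theorem gw_estimator_second_moment_single
    (n : ℕ) (hn : 1 ≤ n) (α μ L : ℝ) (hα : 0 < α) (hμ : 0 < μ) (hL : 0 ≤ L)
    (σ : Measure (EuclideanSpace ℝ (Fin n))) [IsProbabilityMeasure σ]
    (hσ_sphere : ∀ᵐ v ∂σ, ‖v‖ = α)
    (hσ_rot : ∀ R : EuclideanSpace ℝ (Fin n) ≃ₗᵢ[ℝ] EuclideanSpace ℝ (Fin n),
      Measure.map R σ = σ)
    (f : EuclideanSpace ℝ (Fin n) → ℝ)
    (hf_diff : Differentiable ℝ f)
    (hf_smooth : ∀ x y, ‖gradient f x - gradient f y‖ ≤ L * ‖x - y‖)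
    (p : EuclideanSpace ℝ (Fin n)) :
    ∫ v, ‖((n : ℝ) / (2 * α ^ 2 * μ) * (f (p + μ • v) - f (p - μ • v))) • v‖ ^ 2 ∂σ
      ≤ (n : ℝ) ^ 2 * (L * α * μ / 2 + ‖gradient f p‖) ^ 2 :=
  gw_estimator_second_moment_single_general n α μ L hα hμ σ hσ_sphere f hf_diff hf_smooth p
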